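/- arXiv:2402.11067 — 6 statements merged into one kernel-verified Lean document; each statement's English description precedes it below -/
import Mathlib

section
/- Let μ be a (σ-finite) measure on [0, ∞) with ∫ t dμ(t) < ∞, and suppose ∫_{[1,∞)} t·log t dμ(t) = +∞ while ∫_{(0,1)} t·log t dμ(t) > −∞. Then lim_{M→∞} ∫ t·log((M·t+1)/(M+t)) dμ(t) = +∞. -/
/-!
For `M ≥ 1` the ratio `(M t + 1) / (M + t)` lies in `[t, 1]` for `t ∈ [0, 1]` and is `≥ 1` for
`t ≥ 1`, so the negative part of `t log ((M t + 1) / (M + t))` is dominated by that of `t log t` on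
`(0, 1)`, uniformly in `M`. As `M → ∞` the ratio tends to `t`, so by Fatou's lemma the integral of
the positive part over `[1, ∞)` eventually exceeds any bound.
-/

open MeasureTheory Filter Set
open scoped ENNReal NNReal Topology

/-- The extended-real-valued integral of a real function: the difference (in `EReal`)
of the lower integrals of the positive and negative parts. -/
noncomputable def eIntegral (μ : Measure ℝ) (f : ℝ → ℝ) : EReal :=
  ((∫⁻ t, ENNReal.ofReal (f t) ∂μ : ℝ≥0∞) : EReal) -
    ((∫⁻ t, ENNReal.ofReal (-f t) ∂μ : ℝ≥0∞) : EReal)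

theorem EReal.tendsto_coe_ennreal_sub_nhds_top {ι : Type*} {l : Filter ι} {a b : ι → ℝ≥0∞}
    {C : ℝ≥0∞} (ha : Tendsto a l (𝓝 ⊤)) (hb : ∀ᶠ i in l, b i ≤ C) (hC : C ≠ ⊤) :
    Tendsto (fun i => (a i : EReal) - b i) l (𝓝 ⊤) := by
  lift C to ℝ≥0 using hC
  have ha' : Tendsto (fun i => (a i : EReal) + ((-C : ℝ) : EReal)) l (𝓝 ⊤) :=
    (EReal.continuousAt_add_top_coe (-C : ℝ)).tendsto.comp
      (((continuous_coe_ennreal_ereal.tendsto ⊤).comp ha).prodMk_nhds tendsto_const_nhds)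
  refine tendsto_nhds_top_mono ha' (hb.mono fun i hi => ?_)
  change (a i : EReal) + ((-C : ℝ) : EReal) ≤ _
  rw [EReal.coe_neg, ← sub_eq_add_neg, ← EReal.coe_nnreal_eq_coe_real]
  exact EReal.sub_le_sub le_rfl (by exact_mod_cast hi)

theorem le_mul_add_one_div_add {M t : ℝ} (hM : 1 ≤ M) (ht₀ : 0 ≤ t) (ht₁ : t ≤ 1) :
    t ≤ (M * t + 1) / (M + t) := by
  rw [le_div_iff₀ (by linarith)]
  nlinarith

theorem one_le_mul_add_one_div_add {M t : ℝ} (hM : 1 ≤ M) (ht : 1 ≤ t) :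
    1 ≤ (M * t + 1) / (M + t) := by
  rw [le_div_iff₀ (by linarith)]
  nlinarith

theorem tendsto_mul_add_one_div_add_atTop (t : ℝ) :
    Tendsto (fun M : ℝ => (M * t + 1) / (M + t)) atTop (𝓝 t) := by
  have h : Tendsto (fun M : ℝ => t + (1 - t ^ 2) / (M + t)) atTop (𝓝 (t + 0)) :=
    tendsto_const_nhds.add <| tendsto_const_nhds.div_atTop <|
      tendsto_atTop_add_const_right _ t tendsto_id
  rw [add_zero] at h
  refine h.congr' ?_
  filter_upwards [eventually_gt_atTop (-t)] with M hM
  have : M + t ≠ 0 := by linarith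
  field_simp
  ring

theorem tendsto_mul_log_mul_add_one_div_add_atTop {t : ℝ} (ht : t ≠ 0) :
    Tendsto (fun M : ℝ => t * Real.log ((M * t + 1) / (M + t))) atTop (𝓝 (t * Real.log t)) :=
  tendsto_const_nhds.mul <|
    (Real.continuousAt_log ht).tendsto.comp (tendsto_mul_add_one_div_add_atTop t)

theorem lintegral_ofReal_neg_mul_log_le (μ : Measure ℝ) (hsupp : μ (Iio 0) = 0) {M : ℝ}
    (hM : 1 ≤ M) :
    ∫⁻ t, ENNReal.ofReal (-(t * Real.log ((M * t + 1) / (M + t)))) ∂μ ≤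
      ∫⁻ t in Ioo 0 1, ENNReal.ofReal (-(t * Real.log t)) ∂μ := by
  rw [← lintegral_indicator measurableSet_Ioo]
  have hnonneg : ∀ᵐ t ∂μ, 0 ≤ t :=
    (measure_eq_zero_iff_ae_notMem.1 hsupp).mono fun t ht => not_lt.1 ht
  refine lintegral_mono_ae (hnonneg.mono fun t ht₀ => ?_)
  by_cases ht : t ∈ Ioo 0 1
  · rw [indicator_of_mem ht]
    refine ENNReal.ofReal_le_ofReal (neg_le_neg (mul_le_mul_of_nonneg_left ?_ ht₀))
    exact Real.log_le_log ht.1 (le_mul_add_one_div_add hM ht₀ ht.2.le)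
  · suffices 0 ≤ t * Real.log ((M * t + 1) / (M + t)) by
      simp [ENNReal.ofReal_eq_zero.2 (neg_nonpos.2 this)]
    rcases ht₀.eq_or_lt with rfl | ht₀
    · simp
    · have ht₁ : 1 ≤ t := by simpa [ht₀] using ht
      exact mul_nonneg ht₀.le (Real.log_nonneg (one_le_mul_add_one_div_add hM ht₁))

theorem tendsto_lintegral_ofReal_mul_log_atTop (μ : Measure ℝ)
    (htop : ∫⁻ t in Ici 1, ENNReal.ofReal (t * Real.log t) ∂μ = ⊤) :
    Tendsto (fun M : ℝ => ∫⁻ t, ENNReal.ofReal (t * Real.log ((M * t + 1) / (M + t))) ∂μ)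
      atTop (𝓝 ⊤) := by
  set f : ℝ → ℝ → ℝ≥0∞ := fun M t => ENNReal.ofReal (t * Real.log ((M * t + 1) / (M + t)))
  refine tendsto_of_le_liminf_of_limsup_le ?_ le_top
  calc ⊤ = ∫⁻ t in Ici 1, liminf (fun M => f M t) atTop ∂μ := by
        rw [← htop]
        refine setLIntegral_congr_fun measurableSet_Ici fun t ht => (Tendsto.liminf_eq ?_).symm
        have ht₀ : t ≠ 0 := by linarith [mem_Ici.1 ht]
        exact (ENNReal.continuous_ofReal.tendsto _).comp
          (tendsto_mul_log_mul_add_one_div_add_atTop ht₀)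
    _ ≤ liminf (fun M => ∫⁻ t in Ici 1, f M t ∂μ) atTop :=
        lintegral_liminf_le fun M => by fun_prop
    _ ≤ liminf (fun M => ∫⁻ t, f M t ∂μ) atTop :=
        liminf_le_liminf (Eventually.of_forall fun M => setLIntegral_le_lintegral _ _)

theorem stmt_5_general (μ : Measure ℝ) (hsupp : μ (Set.Iio 0) = 0)
    (htop : ∫⁻ t in Set.Ici (1 : ℝ), ENNReal.ofReal (t * Real.log t) ∂μ = ⊤)
    (hneg : ∫⁻ t in Set.Ioo (0 : ℝ) 1, ENNReal.ofReal (-(t * Real.log t)) ∂μ < ⊤) :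
    Tendsto (fun M : ℝ => eIntegral μ (fun t => t * Real.log ((M * t + 1) / (M + t))))
      atTop (nhds ⊤) :=
  EReal.tendsto_coe_ennreal_sub_nhds_top (tendsto_lintegral_ofReal_mul_log_atTop μ htop)
    ((eventually_ge_atTop 1).mono fun _ hM => lintegral_ofReal_neg_mul_log_le μ hsupp hM)
    hneg.ne

theorem stmt_5 (μ : Measure ℝ) (hsupp : μ (Set.Iio 0) = 0)
    (hint : ∫⁻ t, ENNReal.ofReal t ∂μ < ⊤)
    (htop : ∫⁻ t in Set.Ici (1 : ℝ), ENNReal.ofReal (t * Real.log t) ∂μ = ⊤)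
    (hneg : ∫⁻ t in Set.Ioo (0 : ℝ) 1, ENNReal.ofReal (-(t * Real.log t)) ∂μ < ⊤) :
    Tendsto (fun M : ℝ => eIntegral μ (fun t => t * Real.log ((M * t + 1) / (M + t))))
      atTop (nhds ⊤) :=
  stmt_5_general μ hsupp htop hneg
end

section
/- Let μ be a measure on [0, ∞) with ∫ t dμ(t) < ∞, and suppose ∫_{(0,1)} t·log t dμ(t) = −∞ while ∫_{[1,∞)} t·log t dμ(t) < +∞. Then lim_{M→∞} ∫ t·log((M·t+1)/(M+t)) dμ(t) = −∞. -/
open MeasureTheory Filter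
open scoped ENNReal

private lemma ratio_pos {M t : ℝ} (hM : 0 ≤ M) (ht : 0 < t) :
    0 < (M * t + 1) / (M + t) := by
  apply div_pos (by nlinarith) (by nlinarith)

private lemma ratio_antitone {c M t : ℝ} (hc : 0 ≤ c) (hcM : c ≤ M) (ht0 : 0 < t)
    (ht1 : t < 1) : (M * t + 1) / (M + t) ≤ (c * t + 1) / (c + t) := by
  have h1 : 0 < M + t := by nlinarith
  have h2 : 0 < c + t := by nlinarith
  rw [div_le_div_iff₀ h1 h2]
  have key : 0 ≤ (M - c) * (1 - t ^ 2) := mul_nonneg (by linarith) (by nlinarith)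
  nlinarith [key]

private lemma neg_part_mono {c M t : ℝ} (hc : 0 ≤ c) (hcM : c ≤ M) (ht0 : 0 < t)
    (ht1 : t < 1) :
    ENNReal.ofReal (-(t * Real.log ((c * t + 1) / (c + t)))) ≤
      ENNReal.ofReal (-(t * Real.log ((M * t + 1) / (M + t)))) := by
  apply ENNReal.ofReal_le_ofReal
  have hlog : Real.log ((M * t + 1) / (M + t)) ≤ Real.log ((c * t + 1) / (c + t)) :=
    Real.log_le_log (ratio_pos (hc.trans hcM) ht0) (ratio_antitone hc hcM ht0 ht1)
  nlinarith [mul_le_mul_of_nonneg_left hlog ht0.le]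

private lemma ratio_tendsto {t : ℝ} (ht0 : 0 < t) :
    Tendsto (fun M : ℝ => (M * t + 1) / (M + t)) atTop (nhds t) := by
  have h1 : Tendsto (fun M : ℝ => t + (1 - t ^ 2) * (M + t)⁻¹) atTop
      (nhds (t + (1 - t ^ 2) * 0)) := by
    exact tendsto_const_nhds.add (tendsto_const_nhds.mul
      (tendsto_inv_atTop_zero.comp (tendsto_atTop_add_const_right _ t tendsto_id)))
  rw [mul_zero, add_zero] at h1
  apply h1.congr'
  filter_upwards [eventually_gt_atTop (-t + 1)] with M hM
  have hMt : M + t ≠ 0 := by nlinarith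
  field_simp
  ring

private lemma neg_part_tendsto {t : ℝ} (ht0 : 0 < t) :
    Tendsto (fun M : ℝ => ENNReal.ofReal (-(t * Real.log ((M * t + 1) / (M + t))))) atTop
      (nhds (ENNReal.ofReal (-(t * Real.log t)))) := by
  have h2 : Tendsto (fun M : ℝ => Real.log ((M * t + 1) / (M + t))) atTop
      (nhds (Real.log t)) :=
    (Real.continuousAt_log ht0.ne').tendsto.comp (ratio_tendsto ht0)
  exact (ENNReal.continuous_ofReal.tendsto _).comp ((h2.const_mul t).neg)

theorem stmt_6 (μ : Measure ℝ) (hsupp : μ (Set.Iio 0) = 0)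
    (hint : ∫⁻ t, ENNReal.ofReal t ∂μ < ⊤)
    (hbot : ∫⁻ t in Set.Ioo (0 : ℝ) 1, ENNReal.ofReal (-(t * Real.log t)) ∂μ = ⊤)
    (hpos : ∫⁻ t in Set.Ici (1 : ℝ), ENNReal.ofReal (t * Real.log t) ∂μ < ⊤) :
    Tendsto (fun M : ℝ => eIntegral μ (fun t => t * Real.log ((M * t + 1) / (M + t))))
      atTop (nhds ⊥) := by
  have hae : ∀ᵐ t ∂μ, 0 ≤ t := by
    rw [ae_iff]
    convert hsupp using 2
    ext t
    simp [not_le]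
  set C : ℝ≥0∞ := ∫⁻ t in Set.Ici (1 : ℝ), ENNReal.ofReal (t * Real.log t) ∂μ with hCdef
  set P : ℝ → ℝ≥0∞ :=
    fun M => ∫⁻ t, ENNReal.ofReal (t * Real.log ((M * t + 1) / (M + t))) ∂μ with hPdef
  set N : ℝ → ℝ≥0∞ :=
    fun M => ∫⁻ t, ENNReal.ofReal (-(t * Real.log ((M * t + 1) / (M + t)))) ∂μ with hNdef
  set Nr : ℝ → ℝ≥0∞ := fun M => ∫⁻ t in Set.Ioo (0 : ℝ) 1,
    ENNReal.ofReal (-(t * Real.log ((M * t + 1) / (M + t)))) ∂μ with hNrdef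
  -- the positive part is uniformly bounded by C
  have hP : ∀ M : ℝ, 1 ≤ M → P M ≤ C := by
    intro M hM
    have : P M ≤ ∫⁻ t, Set.indicator (Set.Ici (1 : ℝ))
        (fun t => ENNReal.ofReal (t * Real.log t)) t ∂μ := by
      apply lintegral_mono_ae
      filter_upwards [hae] with t ht
      by_cases h1 : 1 ≤ t
      · rw [Set.indicator_of_mem (show t ∈ Set.Ici (1:ℝ) from h1)]
        apply ENNReal.ofReal_le_ofReal
        have hd : 0 < M + t := by nlinarith
        have hr : (M * t + 1) / (M + t) ≤ t := by
          rw [div_le_iff₀ hd]; nlinarith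
        have := Real.log_le_log (ratio_pos (by linarith) (by linarith)) hr
        nlinarith [mul_le_mul_of_nonneg_left this (by linarith : (0:ℝ) ≤ t)]
      · rw [Set.indicator_of_notMem (show t ∉ Set.Ici (1:ℝ) from h1)]
        simp only [nonpos_iff_eq_zero, ENNReal.ofReal_eq_zero]
        push_neg at h1
        rcases eq_or_lt_of_le ht with h0 | h0
        · simp [← h0]
        · have hd : 0 < M + t := by nlinarith
          have hr : (M * t + 1) / (M + t) ≤ 1 := by
            rw [div_le_one hd]; nlinarith
          have := Real.log_nonpos (le_of_lt (ratio_pos (by linarith) h0)) hr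
          nlinarith
    rwa [lintegral_indicator measurableSet_Ici] at this
  -- monotonicity of the restricted negative part
  have hNr_mono : ∀ c M : ℝ, 0 ≤ c → c ≤ M → Nr c ≤ Nr M := by
    intro c M hc hcM
    apply lintegral_mono_ae
    rw [ae_restrict_iff' measurableSet_Ioo]
    apply ae_of_all
    intro t ht
    exact neg_part_mono hc hcM ht.1 ht.2
  -- MCT along the natural numbers
  have hNr_nat : Tendsto (fun n : ℕ => Nr n) atTop (nhds ⊤) := by
    have := lintegral_tendsto_of_tendsto_of_monotone
      (μ := μ.restrict (Set.Ioo (0 : ℝ) 1))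
      (f := fun n t => ENNReal.ofReal (-(t * Real.log (((n : ℝ) * t + 1) / ((n : ℝ) + t)))))
      (F := fun t => ENNReal.ofReal (-(t * Real.log t)))
      (fun n => (ENNReal.measurable_ofReal.comp ((measurable_id.mul
        (Real.measurable_log.comp (((measurable_const.mul measurable_id).add
          measurable_const).div (measurable_const.add measurable_id)))).neg)).aemeasurable)
      (by
        rw [ae_restrict_iff' measurableSet_Ioo]
        apply ae_of_all
        intro t ht
        intro n m hnm
        exact neg_part_mono (Nat.cast_nonneg n) (Nat.cast_le.2 hnm) ht.1 ht.2)
      (by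
        rw [ae_restrict_iff' measurableSet_Ioo]
        apply ae_of_all
        intro t ht
        exact (neg_part_tendsto ht.1).comp tendsto_natCast_atTop_atTop)
    rwa [hbot] at this
  -- the full negative part tends to ⊤
  have hN : Tendsto N atTop (nhds ⊤) := by
    rw [ENNReal.tendsto_nhds_top_iff_nat]
    intro n
    have : ∀ᶠ k : ℕ in atTop, (n : ℝ≥0∞) < Nr k :=
      hNr_nat.eventually (eventually_gt_nhds (ENNReal.natCast_lt_top n))
    obtain ⟨k, hk⟩ := this.exists
    filter_upwards [eventually_ge_atTop (k : ℝ)] with M hM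
    calc (n : ℝ≥0∞) < Nr k := hk
      _ ≤ Nr M := hNr_mono _ _ (Nat.cast_nonneg k) hM
      _ ≤ N M := setLIntegral_le_lintegral _ _
  -- conclusion
  have hCt : C ≠ ⊤ := hpos.ne
  rw [EReal.tendsto_nhds_bot_iff_real]
  intro x
  set b : ℝ≥0∞ := C + ENNReal.ofReal (|x| + 1) with hbdef
  have hbt : b ≠ ⊤ := by
    rw [hbdef]
    exact ENNReal.add_ne_top.2 ⟨hCt, ENNReal.ofReal_ne_top⟩
  have hblt : b < ⊤ := lt_top_iff_ne_top.2 hbt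
  filter_upwards [eventually_ge_atTop (1 : ℝ), hN.eventually (eventually_gt_nhds hblt)]
    with M hM1 hMb
  have hPM : P M ≤ C := hP M hM1
  have hPt : P M ≠ ⊤ := (lt_of_le_of_lt hPM (lt_top_iff_ne_top.2 hCt)).ne
  show ((P M : EReal) - (N M : EReal)) < (x : EReal)
  by_cases hNt : N M = ⊤
  · rw [hNt, EReal.coe_ennreal_top, EReal.sub_top]
    exact EReal.bot_lt_coe x
  · have hcoeP : ((P M : ℝ≥0∞) : EReal) = (((P M).toReal : ℝ) : EReal) := by
      rw [← ENNReal.ofReal_toReal hPt, EReal.coe_ennreal_ofReal,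
        max_eq_left ENNReal.toReal_nonneg, ENNReal.toReal_ofReal ENNReal.toReal_nonneg]
    have hcoeN : ((N M : ℝ≥0∞) : EReal) = (((N M).toReal : ℝ) : EReal) := by
      rw [← ENNReal.ofReal_toReal hNt, EReal.coe_ennreal_ofReal,
        max_eq_left ENNReal.toReal_nonneg, ENNReal.toReal_ofReal ENNReal.toReal_nonneg]
    rw [hcoeP, hcoeN, ← EReal.coe_sub, EReal.coe_lt_coe_iff]
    have h1 : (P M).toReal ≤ C.toReal :=
      ENNReal.toReal_mono hCt hPM
    have h2 : b.toReal < (N M).toReal :=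
      ENNReal.toReal_lt_toReal hbt hNt |>.2 hMb
    have h3 : b.toReal = C.toReal + (|x| + 1) := by
      rw [hbdef, ENNReal.toReal_add hCt ENNReal.ofReal_ne_top,
        ENNReal.toReal_ofReal (by positivity)]
    have h4 : -|x| ≤ x := neg_abs_le x
    linarith
end

section
/- Let μ be a measure on [0, ∞) with ∫ t dμ(t) < ∞ and such that ∫ t·log t dμ(t) exists in the extended reals (i.e., at least one of the positive/negative parts is finite). Then lim_{M→∞} ∫ t·log((M·t+1)/(M+t)) dμ(t) = ∫ t·log t dμ(t) in the extended reals. -/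
open MeasureTheory Filter
open scoped ENNReal

/-! For `t ≥ 0` and `M ≥ 1` the ratio `(M t + 1) / (M + t) = t + (1 - t²) / (M + t)` lies in
`[1, t]` and increases to `t` when `t ≥ 1`, and lies in `[t, 1]` and decreases to `t` when
`t ≤ 1`. Hence both the positive and the negative part of `t log ((M t + 1) / (M + t))` increase
with `M` to those of `t log t`, monotone convergence applies to each part, and since one of the
two limits is finite, their difference converges in `EReal`. -/

theorem tendsto_lintegral_of_monotone {α ι : Type*} [MeasurableSpace α] {μ : Measure α}
    [Preorder ι] [IsDirectedOrder ι] [Nonempty ι] [(atTop : Filter ι).IsCountablyGenerated]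
    {f : ι → α → ℝ≥0∞} {g : α → ℝ≥0∞} (hf : ∀ i, AEMeasurable (f i) μ)
    (h_mono : ∀ᵐ x ∂μ, Monotone fun i => f i x)
    (h_tendsto : ∀ᵐ x ∂μ, Tendsto (fun i => f i x) atTop (nhds (g x))) :
    Tendsto (fun i => ∫⁻ x, f i x ∂μ) atTop (nhds (∫⁻ x, g x ∂μ)) := by
  have hI : Monotone fun i => ∫⁻ x, f i x ∂μ := fun i j hij =>
    lintegral_mono_ae (h_mono.mono fun x hx => hx hij)
  obtain ⟨u, hu_mono, hu⟩ := exists_seq_monotone_tendsto_atTop_atTop ι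
  have h_seq : Tendsto (fun n => ∫⁻ x, f (u n) x ∂μ) atTop (nhds (∫⁻ x, g x ∂μ)) :=
    lintegral_tendsto_of_tendsto_of_monotone (fun n => hf (u n))
      (h_mono.mono fun x hx m n hmn => hx (hu_mono hmn)) (h_tendsto.mono fun x hx => hx.comp hu)
  rw [← tendsto_nhds_unique ((tendsto_atTop_iSup hI).comp hu) h_seq]
  exact tendsto_atTop_iSup hI

theorem tendsto_eIntegral_of_tendsto_lintegral {ι : Type*} {l : Filter ι} {μ : Measure ℝ}
    {f : ι → ℝ → ℝ} {g : ℝ → ℝ}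
    (h_pos : Tendsto (fun i => ∫⁻ t, ENNReal.ofReal (f i t) ∂μ) l
      (nhds (∫⁻ t, ENNReal.ofReal (g t) ∂μ)))
    (h_neg : Tendsto (fun i => ∫⁻ t, ENNReal.ofReal (-f i t) ∂μ) l
      (nhds (∫⁻ t, ENNReal.ofReal (-g t) ∂μ)))
    (hg : (∫⁻ t, ENNReal.ofReal (g t) ∂μ < ⊤) ∨ (∫⁻ t, ENNReal.ofReal (-g t) ∂μ < ⊤)) :
    Tendsto (fun i => eIntegral μ (f i)) l (nhds (eIntegral μ g)) := by
  have h_top : ((∫⁻ t, ENNReal.ofReal (g t) ∂μ : ℝ≥0∞) : EReal) ≠ ⊤ ∨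
      -((∫⁻ t, ENNReal.ofReal (-g t) ∂μ : ℝ≥0∞) : EReal) ≠ ⊥ := by
    simpa [EReal.coe_ennreal_eq_top_iff, lt_top_iff_ne_top] using hg
  have h_bot : ((∫⁻ t, ENNReal.ofReal (g t) ∂μ : ℝ≥0∞) : EReal) ≠ ⊥ ∨
      -((∫⁻ t, ENNReal.ofReal (-g t) ∂μ : ℝ≥0∞) : EReal) ≠ ⊤ :=
    Or.inl (EReal.coe_ennreal_ne_bot _)
  simp only [eIntegral, sub_eq_add_neg]
  exact (EReal.continuousAt_add h_top h_bot).tendsto.comp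
    ((EReal.tendsto_coe_ennreal.2 h_pos).prodMk_nhds (EReal.tendsto_coe_ennreal.2 h_neg).neg)

noncomputable def mulLogRatio (M t : ℝ) : ℝ := t * Real.log ((M * t + 1) / (M + t))

section mulLogRatio

variable {M M' t : ℝ}

theorem measurable_mulLogRatio (M : ℝ) : Measurable (mulLogRatio M) := by
  unfold mulLogRatio; fun_prop

theorem mulLogRatio_nonneg (hM : 1 ≤ M) (ht : 1 ≤ t) : 0 ≤ mulLogRatio M t := by
  refine mul_nonneg (by linarith) (Real.log_nonneg ?_)
  rw [le_div_iff₀ (by linarith)]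
  nlinarith

theorem mulLogRatio_nonpos (hM : 1 ≤ M) (ht₀ : 0 ≤ t) (ht₁ : t ≤ 1) : mulLogRatio M t ≤ 0 := by
  refine mul_nonpos_of_nonneg_of_nonpos ht₀ (Real.log_nonpos (by positivity) ?_)
  rw [div_le_one (by linarith)]
  nlinarith

theorem mulLogRatio_le_mulLogRatio_of_one_le (hM : 0 < M) (hMM' : M ≤ M') (ht : 1 ≤ t) :
    mulLogRatio M t ≤ mulLogRatio M' t := by
  have hM' : 0 < M' := hM.trans_le hMM'
  refine mul_le_mul_of_nonneg_left (Real.log_le_log (by positivity) ?_) (by linarith)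
  rw [div_le_div_iff₀ (by linarith) (by linarith)]
  nlinarith [mul_nonneg (sub_nonneg.2 hMM') (by nlinarith : (0 : ℝ) ≤ t ^ 2 - 1)]

theorem mulLogRatio_le_mulLogRatio_of_le_one (hM : 0 < M) (hMM' : M ≤ M') (ht₀ : 0 ≤ t)
    (ht₁ : t ≤ 1) : mulLogRatio M' t ≤ mulLogRatio M t := by
  have hM' : 0 < M' := hM.trans_le hMM'
  refine mul_le_mul_of_nonneg_left (Real.log_le_log (by positivity) ?_) ht₀
  rw [div_le_div_iff₀ (by linarith) (by linarith)]
  nlinarith [mul_nonneg (sub_nonneg.2 hMM') (by nlinarith : (0 : ℝ) ≤ 1 - t ^ 2)]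

theorem monotone_ofReal_mulLogRatio_max (ht : 0 ≤ t) :
    Monotone fun M => ENNReal.ofReal (mulLogRatio (max M 1) t) := by
  intro M M' hMM'
  dsimp only
  have hM : 1 ≤ max M 1 := le_max_right M 1
  rcases le_total t 1 with ht₁ | ht₁
  · rw [ENNReal.ofReal_of_nonpos (mulLogRatio_nonpos hM ht ht₁)]
    exact zero_le
  · exact ENNReal.ofReal_le_ofReal
      (mulLogRatio_le_mulLogRatio_of_one_le (by linarith) (max_le_max_right 1 hMM') ht₁)

theorem monotone_ofReal_neg_mulLogRatio_max (ht : 0 ≤ t) :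
    Monotone fun M => ENNReal.ofReal (-mulLogRatio (max M 1) t) := by
  intro M M' hMM'
  dsimp only
  have hM : 1 ≤ max M 1 := le_max_right M 1
  rcases le_total t 1 with ht₁ | ht₁
  · exact ENNReal.ofReal_le_ofReal <| neg_le_neg <|
      mulLogRatio_le_mulLogRatio_of_le_one (by linarith) (max_le_max_right 1 hMM') ht ht₁
  · rw [ENNReal.ofReal_of_nonpos (neg_nonpos.2 (mulLogRatio_nonneg hM ht₁))]
    exact zero_le

theorem tendsto_mulLogRatio (ht : 0 ≤ t) :
    Tendsto (fun M => mulLogRatio M t) atTop (nhds (t * Real.log t)) := by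
  rcases ht.eq_or_lt with rfl | ht
  · simp [mulLogRatio]
  have h_ratio : Tendsto (fun M => (M * t + 1) / (M + t)) atTop (nhds t) := by
    have h : Tendsto (fun M => t + (1 - t ^ 2) / (M + t)) atTop (nhds (t + 0)) :=
      tendsto_const_nhds.add <| tendsto_const_nhds.div_atTop <|
        tendsto_atTop_add_const_right _ t tendsto_id
    rw [add_zero] at h
    refine h.congr' ?_
    filter_upwards [eventually_gt_atTop 0] with M hM
    field_simp
    ring
  exact ((Real.continuousAt_log ht.ne').tendsto.comp h_ratio).const_mul t

end mulLogRatio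

theorem stmt_7_general (μ : Measure ℝ) (hsupp : μ (Set.Iio 0) = 0)
    (hex : (∫⁻ t, ENNReal.ofReal (t * Real.log t) ∂μ < ⊤) ∨
           (∫⁻ t, ENNReal.ofReal (-(t * Real.log t)) ∂μ < ⊤)) :
    Tendsto (fun M : ℝ => eIntegral μ (fun t => t * Real.log ((M * t + 1) / (M + t))))
      atTop (nhds (eIntegral μ (fun t => t * Real.log t))) := by
  have hae : ∀ᵐ t ∂μ, 0 ≤ t := by simpa [ae_iff, Set.Iio] using hsupp
  have h_lim : ∀ᵐ t ∂μ, Tendsto (fun M => mulLogRatio (max M 1) t) atTop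
      (nhds (t * Real.log t)) := hae.mono fun t ht =>
    (tendsto_mulLogRatio ht).comp (tendsto_atTop_mono (le_max_left · 1) tendsto_id)
  have h_eq : (fun M => eIntegral μ (mulLogRatio (max M 1))) =ᶠ[atTop]
      fun M => eIntegral μ (mulLogRatio M) := by
    filter_upwards [eventually_ge_atTop 1] with M hM
    rw [max_eq_left hM]
  refine (tendsto_eIntegral_of_tendsto_lintegral ?_ ?_ hex).congr' h_eq
  · exact tendsto_lintegral_of_monotone
      (fun M => (measurable_mulLogRatio _).ennreal_ofReal.aemeasurable)
      (hae.mono fun t => monotone_ofReal_mulLogRatio_max)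
      (h_lim.mono fun t ht => (ENNReal.continuous_ofReal.tendsto _).comp ht)
  · exact tendsto_lintegral_of_monotone
      (fun M => (measurable_mulLogRatio _).neg.ennreal_ofReal.aemeasurable)
      (hae.mono fun t => monotone_ofReal_neg_mulLogRatio_max)
      (h_lim.mono fun t ht => (ENNReal.continuous_ofReal.tendsto _).comp ht.neg)

theorem stmt_7 (μ : Measure ℝ) (hsupp : μ (Set.Iio 0) = 0)
    (hint : ∫⁻ t, ENNReal.ofReal t ∂μ < ⊤)
    (hex : (∫⁻ t, ENNReal.ofReal (t * Real.log t) ∂μ < ⊤) ∨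
           (∫⁻ t, ENNReal.ofReal (-(t * Real.log t)) ∂μ < ⊤)) :
    Tendsto (fun M : ℝ => eIntegral μ (fun t => t * Real.log ((M * t + 1) / (M + t))))
      atTop (nhds (eIntegral μ (fun t => t * Real.log t))) :=
  stmt_7_general μ hsupp hex
end

section
/- Let μ be a measure on [0, ∞) with ∫ t dμ(t) < ∞, and let ε > 0, c > 0 with ∫ t^{1−ε} dμ(t) ≤ c. Then for every m > 0, ∫ t·log(1 + m/t) dμ(t) ≤ c·(1 + r(ε)^{1−ε})·m^ε, where r(ε) > 0 is any constant such that log(1+u) ≤ u^ε for all u > r(ε). -/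
open MeasureTheory

theorem stmt_11 (μ : Measure ℝ) (hsupp : μ (Set.Iio 0) = 0)
    (hint : ∫⁻ t, ENNReal.ofReal t ∂μ < ⊤)
    (ε c r : ℝ) (hε : 0 < ε) (hε1 : ε < 1) (hc : 0 < c) (hr : 0 < r)
    (hrε : ∀ u : ℝ, r < u → Real.log (1 + u) ≤ u ^ ε)
    (hpow : ∫⁻ t, ENNReal.ofReal (t ^ (1 - ε)) ∂μ ≤ ENNReal.ofReal c) :
    ∀ m : ℝ, 0 < m →
      ∫⁻ t, ENNReal.ofReal (t * Real.log (1 + m / t)) ∂μ ≤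
        ENNReal.ofReal (c * (1 + r ^ (1 - ε)) * m ^ ε) := by
  intro m hm
  set K := (1 + r ^ (1 - ε)) * m ^ ε with hK
  have hrp : (0:ℝ) ≤ r ^ (1 - ε) := Real.rpow_nonneg hr.le _
  have hmp : (0:ℝ) ≤ m ^ ε := Real.rpow_nonneg hm.le _
  have hKnn : 0 ≤ K := by positivity
  have h0 : ∀ᵐ t ∂μ, 0 ≤ t := by
    rw [ae_iff]
    convert hsupp using 2
    ext t; simp [not_le]
  have hpt : ∀ t : ℝ, 0 ≤ t → t * Real.log (1 + m / t) ≤ K * t ^ (1 - ε) := by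
    intro t ht
    rcases eq_or_lt_of_le ht with h | h
    · simp [← h, Real.zero_rpow (by linarith : (1:ℝ) - ε ≠ 0)]
    · by_cases hcase : r < m / t
      · have h1 : Real.log (1 + m / t) ≤ (m / t) ^ ε := hrε _ hcase
        have h2 : t * (m / t) ^ ε = m ^ ε * t ^ (1 - ε) := by
          rw [Real.div_rpow hm.le h.le, Real.rpow_sub h, Real.rpow_one]
          field_simp
        calc t * Real.log (1 + m / t) ≤ t * (m/t)^ε :=
              mul_le_mul_of_nonneg_left h1 h.le
          _ = m ^ ε * t ^ (1-ε) := h2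
          _ ≤ K * t ^ (1-ε) := by
              apply mul_le_mul_of_nonneg_right _ (Real.rpow_nonneg h.le _)
              rw [hK]; nlinarith
      · push_neg at hcase
        have hlog : Real.log (1 + m / t) ≤ m / t := by
          have := Real.log_le_sub_one_of_pos (x := 1 + m/t) (by positivity)
          linarith
        have h1 : t * Real.log (1 + m / t) ≤ m := by
          have h2 := mul_le_mul_of_nonneg_left hlog h.le
          rwa [mul_div_cancel₀ m h.ne'] at h2
        have hm_le : m ≤ r * t := by
          rw [div_le_iff₀ h] at hcase; linarith
        have h2 : m = m ^ ε * m ^ (1-ε) := by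
          rw [← Real.rpow_add hm]
          norm_num
        have h3 : m ^ (1-ε) ≤ (r*t) ^ (1-ε) :=
          Real.rpow_le_rpow hm.le hm_le (by linarith)
        have h4 : (r*t)^(1-ε) = r^(1-ε) * t^(1-ε) := Real.mul_rpow hr.le ht
        have htp : (0:ℝ) ≤ t ^ (1-ε) := Real.rpow_nonneg ht _
        calc t * Real.log (1 + m/t) ≤ m := h1
          _ = m ^ ε * m ^ (1-ε) := h2
          _ ≤ m ^ ε * (r^(1-ε) * t^(1-ε)) := by
              rw [← h4]; exact mul_le_mul_of_nonneg_left h3 hmp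
          _ ≤ K * t^(1-ε) := by rw [hK]; nlinarith
  calc ∫⁻ t, ENNReal.ofReal (t * Real.log (1 + m / t)) ∂μ
      ≤ ∫⁻ t, ENNReal.ofReal K * ENNReal.ofReal (t ^ (1-ε)) ∂μ := by
        apply lintegral_mono_ae
        filter_upwards [h0] with t ht
        rw [← ENNReal.ofReal_mul hKnn]
        exact ENNReal.ofReal_le_ofReal (hpt t ht)
    _ = ENNReal.ofReal K * ∫⁻ t, ENNReal.ofReal (t ^ (1-ε)) ∂μ :=
        lintegral_const_mul' _ _ ENNReal.ofReal_ne_top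
    _ ≤ ENNReal.ofReal K * ENNReal.ofReal c := mul_le_mul_right hpow _
    _ = ENNReal.ofReal (c * (1 + r^(1-ε)) * m^ε) := by
        rw [← ENNReal.ofReal_mul hKnn, hK, show (1 + r^(1-ε)) * m^ε * c = c * (1 + r^(1-ε)) * m^ε by ring]
end

section
/- Let (α_n) be a sequence of positive reals with Σ α_n < ∞. Then there exists a sequence (λ_n) of positive reals such that Σ α_n·λ_n < ∞ and Σ α_n·λ_n·log λ_n = +∞. -/
open Filter

theorem stmt_14 (α : ℕ → ℝ) (hα : ∀ n, 0 < α n) (hsum : Summable α) :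
    ∃ lam : ℕ → ℝ, (∀ n, 0 < lam n) ∧ Summable (fun n => α n * lam n) ∧
      Tendsto (fun N => ∑ n ∈ Finset.range N, α n * lam n * Real.log (lam n))
        atTop atTop := by
  classical
  have h0 : Tendsto α atTop (nhds 0) := hsum.tendsto_atTop_zero
  have H : ∀ m : ℕ, ∀ k : ℕ, ∃ n : ℕ, m < n ∧ α n < Real.exp (-((k : ℝ) + 2)^2) := by
    intro m k
    have hε : (0 : ℝ) < Real.exp (-((k : ℝ) + 2)^2) := Real.exp_pos _
    have hev : ∀ᶠ n in atTop, α n < Real.exp (-((k : ℝ) + 2)^2) := by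
      have := h0.eventually (gt_mem_nhds hε)
      simpa using this
    rcases (eventually_atTop.1 hev) with ⟨N, hN⟩
    exact ⟨max N (m + 1), lt_of_lt_of_le (Nat.lt_succ_self m) (le_max_right _ _),
      hN _ (le_max_left _ _)⟩
  choose f hf1 hf2 using H
  set s : ℕ → ℕ := fun k => Nat.rec (f 0 0) (fun k ih => f ih (k + 1)) k with hs
  have hs_mono : StrictMono s := strictMono_nat_of_lt_succ (fun k => hf1 (s k) (k + 1))
  have hs_small : ∀ k, α (s k) < Real.exp (-((k : ℝ) + 2)^2) := by
    intro k
    cases k with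
    | zero => exact hf2 0 0
    | succ k => exact hf2 (s k) (k + 1)
  set lam : ℕ → ℝ := fun n =>
    if h : ∃ k, s k = n then 1 / (((h.choose : ℝ) + 1)^2 * α n) else 1 with hlamdef
  have hlam_pos : ∀ n, 0 < lam n := by
    intro n
    simp only [hlamdef]
    split
    · exact div_pos one_pos (mul_pos (by positivity) (hα n))
    · exact one_pos
  have hlam_s : ∀ k, lam (s k) = 1 / (((k : ℝ) + 1)^2 * α (s k)) := by
    intro k
    have h : ∃ j, s j = s k := ⟨k, rfl⟩
    have hck : h.choose = k := hs_mono.injective h.choose_spec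
    simp only [hlamdef, dif_pos h, hck]
  have hlam_off : ∀ n, (¬ ∃ k, s k = n) → lam n = 1 := by
    intro n hn
    simp only [hlamdef, dif_neg hn]
  -- value of α n * lam n on the subsequence
  have hprod_s : ∀ k : ℕ, α (s k) * lam (s k) = 1 / ((k : ℝ) + 1)^2 := by
    intro k
    have hne := (hα (s k)).ne'
    rw [hlam_s k]
    field_simp
  -- lower bound for the log on the subsequence
  have hlog_s : ∀ k : ℕ, ((k : ℝ) + 1)^2 ≤ Real.log (lam (s k)) := by
    intro k
    rw [hlam_s k]
    have hαk := hα (s k)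
    have h1 : Real.log (α (s k)) < -((k : ℝ) + 2)^2 := by
      have := Real.log_lt_log hαk (hs_small k)
      simpa [Real.log_exp] using this
    have h2 : Real.log (((k : ℝ) + 1)^2) ≤ 2 * ((k : ℝ) + 1) := by
      rw [Real.log_pow]
      have hle : Real.log ((k : ℝ) + 1) ≤ (k : ℝ) + 1 :=
        (Real.log_le_sub_one_of_pos (by positivity)).trans (by linarith)
      push_cast
      linarith
    rw [one_div, Real.log_inv, Real.log_mul (by positivity) hαk.ne']
    nlinarith [h1, h2]
  -- terms of the log series
  have hterm_nonneg : ∀ n, 0 ≤ α n * lam n * Real.log (lam n) := by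
    intro n
    by_cases h : ∃ k, s k = n
    · rcases h with ⟨k, rfl⟩
      have := hlog_s k
      have hp : 0 < α (s k) * lam (s k) := mul_pos (hα _) (hlam_pos _)
      have : (0 : ℝ) ≤ Real.log (lam (s k)) := le_trans (by positivity) (hlog_s k)
      positivity
    · rw [hlam_off n h]
      simp
  have hterm_one : ∀ k : ℕ, 1 ≤ α (s k) * lam (s k) * Real.log (lam (s k)) := by
    intro k
    rw [hprod_s k]
    have h1 := hlog_s k
    have hpos : (0 : ℝ) < ((k : ℝ) + 1)^2 := by positivity
    rw [div_mul_eq_mul_div, one_mul, le_div_iff₀ hpos, one_mul]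
    exact h1
  -- summability
  have hc1 : Summable (fun n =>
      if ∃ k, s k = n then α n * lam n else 0) := by
    set c1 : ℕ → ℝ := fun n => if ∃ k, s k = n then α n * lam n else 0 with hc1def
    have hvanish : ∀ n, n ∉ Set.range s → c1 n = 0 := by
      intro n hn
      have : ¬ ∃ k, s k = n := by
        intro ⟨k, hk⟩; exact hn ⟨k, hk⟩
      simp [hc1def, this]
    have hcomp : (c1 ∘ s) = fun k : ℕ => 1 / ((k : ℝ) + 1)^2 := by
      funext k
      have h : ∃ j, s j = s k := ⟨k, rfl⟩
      simp only [hc1def, Function.comp_apply, if_pos h, hprod_s k]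
    rw [← hs_mono.injective.summable_iff hvanish, hcomp]
    have : Summable (fun n : ℕ => 1 / ((n : ℝ))^2) := by
      simpa using Real.summable_one_div_nat_pow.mpr (by norm_num : 1 < 2)
    have := (summable_nat_add_iff 1).2 this
    simpa [add_comm] using this
  have hsum2 : Summable (fun n => α n * lam n) := by
    apply Summable.of_nonneg_of_le
      (fun n => le_of_lt (mul_pos (hα n) (hlam_pos n)))
      (fun n => ?_) (hc1.add hsum)
    by_cases h : ∃ k, s k = n
    · simp only [if_pos h]
      have := (hα n).le
      linarith
    · simp only [if_neg h, hlam_off n h, mul_one, zero_add, le_refl]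
  refine ⟨lam, hlam_pos, hsum2, ?_⟩
  -- divergence of partial sums
  apply tendsto_atTop_atTop_of_monotone
  · intro a b hab
    apply Finset.sum_le_sum_of_subset_of_nonneg
      (Finset.range_subset_range.2 hab)
    intro n _ _
    exact hterm_nonneg n
  · intro b
    set M := ⌈b⌉₊ with hM
    refine ⟨s M + 1, ?_⟩
    have himg : (Finset.range (M + 1)).image s ⊆ Finset.range (s M + 1) := by
      intro n hn
      rcases Finset.mem_image.1 hn with ⟨k, hk, rfl⟩
      have : k ≤ M := Nat.lt_succ_iff.1 (Finset.mem_range.1 hk)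
      exact Finset.mem_range.2 (Nat.lt_succ_of_le (hs_mono.monotone this))
    have h1 : ∑ n ∈ (Finset.range (M + 1)).image s, α n * lam n * Real.log (lam n)
        ≤ ∑ n ∈ Finset.range (s M + 1), α n * lam n * Real.log (lam n) :=
      Finset.sum_le_sum_of_subset_of_nonneg himg (fun n _ _ => hterm_nonneg n)
    have h2 : ∑ n ∈ (Finset.range (M + 1)).image s, α n * lam n * Real.log (lam n)
        = ∑ k ∈ Finset.range (M + 1), α (s k) * lam (s k) * Real.log (lam (s k)) :=
      Finset.sum_image (fun x _ y _ h => hs_mono.injective h)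
    have h3 : ((M : ℝ) + 1) ≤
        ∑ k ∈ Finset.range (M + 1), α (s k) * lam (s k) * Real.log (lam (s k)) := by
      calc ((M : ℝ) + 1) = ∑ _k ∈ Finset.range (M + 1), (1 : ℝ) := by
              simp
        _ ≤ _ := Finset.sum_le_sum (fun k _ => hterm_one k)
    have hbM : b ≤ (M : ℝ) := Nat.le_ceil b
    linarith [h1, h2 ▸ h3]
end

section
/- For any sequence (a_n) of positive reals with a_{k_n} ≤ 2^{−n} along a subsequence (k_n), setting λ_n = 1/(n²·a_{k_n}) one has λ_n ≥ 2^n/n², Σ λ_n·a_{k_n} = Σ 1/n² < ∞, and Σ a_{k_n}·λ_n·log λ_n ≥ Σ (n·log 2 − 2·log n)/n² = +∞. -/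
open Filter

lemma harmonic_Icc_tendsto :
    Tendsto (fun N : ℕ => ∑ n ∈ Finset.Icc 1 N, (1 : ℝ) / (n : ℕ)) atTop atTop := by
  have h := Real.tendsto_sum_range_one_div_nat_succ_atTop
  have heq : (fun N : ℕ => ∑ n ∈ Finset.Icc 1 N, (1 : ℝ) / (n : ℕ))
      = fun N : ℕ => ∑ i ∈ Finset.range N, (1 / (i + 1) : ℝ) := by
    funext N
    rw [← Finset.Ico_add_one_right_eq_Icc, Finset.sum_Ico_eq_sum_range]
    simp [add_comm]
  rw [heq]
  exact h

lemma log_le_two_sqrt {n : ℕ} (hn : 1 ≤ n) : Real.log n ≤ 2 * Real.sqrt n := by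
  have hn0 : (0 : ℝ) < n := by exact_mod_cast hn
  have h1 : Real.log (Real.sqrt n) ≤ Real.sqrt n - 1 :=
    Real.log_le_sub_one_of_pos (Real.sqrt_pos.mpr hn0)
  have h2 : Real.log (Real.sqrt n) = Real.log n / 2 := Real.log_sqrt hn0.le
  nlinarith [Real.sqrt_nonneg (n : ℝ)]

lemma sqrt_div_sq {n : ℕ} (hn : 1 ≤ n) :
    Real.sqrt n / (n : ℝ) ^ 2 = 1 / (n : ℝ) ^ ((3 : ℝ) / 2) := by
  have hn0 : (0 : ℝ) < n := by exact_mod_cast hn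
  rw [Real.sqrt_eq_rpow]
  have h2 : ((n : ℝ) ^ 2 : ℝ) = (n : ℝ) ^ ((2 : ℝ)) := by
    rw [← Real.rpow_natCast (n : ℝ) 2]; norm_num
  rw [h2, div_eq_div_iff (by positivity) (by positivity), one_mul,
    ← Real.rpow_add hn0]
  norm_num

theorem stmt_16 (a : ℕ → ℝ) (k : ℕ → ℕ) (ha : ∀ n, 0 < a n)
    (hk : ∀ n : ℕ, 1 ≤ n → a (k n) ≤ 1 / 2 ^ n) :
    let lam : ℕ → ℝ := fun n => 1 / ((n : ℝ) ^ 2 * a (k n))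
    (∀ n : ℕ, 1 ≤ n → (2 : ℝ) ^ n / (n : ℝ) ^ 2 ≤ lam n) ∧
    (∀ n : ℕ, 1 ≤ n → lam n * a (k n) = 1 / (n : ℝ) ^ 2) ∧
    (∀ n : ℕ, 1 ≤ n →
      ((n : ℝ) * Real.log 2 - 2 * Real.log n) / (n : ℝ) ^ 2 ≤
        a (k n) * lam n * Real.log (lam n)) ∧
    Tendsto (fun N => ∑ n ∈ Finset.Icc 1 N, a (k n) * lam n * Real.log (lam n))
      atTop atTop := by
  intro lam
  have key1 : ∀ n : ℕ, 1 ≤ n → (2 : ℝ) ^ n / (n : ℝ) ^ 2 ≤ lam n := by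
    intro n hn
    have hn0 : (0 : ℝ) < n := by exact_mod_cast hn
    have hap : 0 < a (k n) := ha (k n)
    have hub : a (k n) ≤ 1 / 2 ^ n := hk n hn
    have h2 : (0 : ℝ) < 2 ^ n := by positivity
    show (2 : ℝ) ^ n / (n : ℝ) ^ 2 ≤ 1 / ((n : ℝ) ^ 2 * a (k n))
    rw [div_le_div_iff₀ (by positivity) (by positivity)]
    have : (2 : ℝ) ^ n * a (k n) ≤ 1 := by
      rw [le_div_iff₀ h2] at hub; linarith [hub]
    nlinarith [sq_nonneg (n : ℝ)]
  have key2 : ∀ n : ℕ, 1 ≤ n → lam n * a (k n) = 1 / (n : ℝ) ^ 2 := by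
    intro n hn
    have hn0 : (0 : ℝ) < n := by exact_mod_cast hn
    have hap : (a (k n)) ≠ 0 := (ha (k n)).ne'
    show 1 / ((n : ℝ) ^ 2 * a (k n)) * a (k n) = 1 / (n : ℝ) ^ 2
    field_simp
  have key3 : ∀ n : ℕ, 1 ≤ n →
      ((n : ℝ) * Real.log 2 - 2 * Real.log n) / (n : ℝ) ^ 2 ≤
        a (k n) * lam n * Real.log (lam n) := by
    intro n hn
    have hn0 : (0 : ℝ) < n := by exact_mod_cast hn
    have hal : a (k n) * lam n = 1 / (n : ℝ) ^ 2 := by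
      rw [mul_comm]; exact key2 n hn
    have hpos : (0 : ℝ) < (2 : ℝ) ^ n / (n : ℝ) ^ 2 := by positivity
    have hlog : Real.log ((2 : ℝ) ^ n / (n : ℝ) ^ 2) ≤ Real.log (lam n) :=
      Real.log_le_log hpos (key1 n hn)
    have hcomp : Real.log ((2 : ℝ) ^ n / (n : ℝ) ^ 2)
        = (n : ℝ) * Real.log 2 - 2 * Real.log n := by
      rw [Real.log_div (by positivity) (by positivity), Real.log_pow, Real.log_pow]
      push_cast; ring
    rw [hal, div_eq_mul_one_div, mul_comm ((n : ℝ) * Real.log 2 - 2 * Real.log n)]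
    have h1n2 : (0 : ℝ) ≤ 1 / (n : ℝ) ^ 2 := by positivity
    exact mul_le_mul_of_nonneg_left (by rw [← hcomp]; exact hlog) h1n2
  refine ⟨key1, key2, key3, ?_⟩
  -- Divergence
  set g : ℕ → ℝ := fun n => ((n : ℝ) * Real.log 2 - 2 * Real.log n) / (n : ℝ) ^ 2 with hg
  have hsummable : Summable (fun n : ℕ => 4 / (n : ℝ) ^ ((3 : ℝ) / 2)) := by
    have := (Real.summable_one_div_nat_rpow (p := (3 : ℝ) / 2)).mpr (by norm_num)
    simpa [div_eq_mul_inv, mul_comm] using this.mul_left 4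
  set L : ℝ := ∑' n : ℕ, 4 / (n : ℝ) ^ ((3 : ℝ) / 2) with hL
  have hglb : ∀ n : ℕ, 1 ≤ n →
      Real.log 2 * (1 / (n : ℝ)) - 4 / (n : ℝ) ^ ((3 : ℝ) / 2) ≤ g n := by
    intro n hn
    have hn0 : (0 : ℝ) < n := by exact_mod_cast hn
    have hlog : Real.log n ≤ 2 * Real.sqrt n := log_le_two_sqrt hn
    have hsq : Real.sqrt n / (n : ℝ) ^ 2 = 1 / (n : ℝ) ^ ((3 : ℝ) / 2) :=
      sqrt_div_sq hn
    have hsplit : g n = Real.log 2 * (1 / (n : ℝ)) - 2 * Real.log n / (n : ℝ) ^ 2 := by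
      rw [hg]
      field_simp
    rw [hsplit]
    have h1 : 2 * Real.log n / (n : ℝ) ^ 2 ≤ 4 * Real.sqrt n / (n : ℝ) ^ 2 := by
      rw [div_le_div_iff_of_pos_right (by positivity)]
      linarith
    have h2 : 4 * Real.sqrt n / (n : ℝ) ^ 2 = 4 / (n : ℝ) ^ ((3 : ℝ) / 2) := by
      rw [mul_div_assoc, hsq]; ring
    linarith
  -- partial sums bound
  have hbound : ∀ N : ℕ,
      Real.log 2 * (∑ n ∈ Finset.Icc 1 N, (1 : ℝ) / n) - L ≤
        ∑ n ∈ Finset.Icc 1 N, a (k n) * lam n * Real.log (lam n) := by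
    intro N
    have hfg : ∑ n ∈ Finset.Icc 1 N, g n ≤
        ∑ n ∈ Finset.Icc 1 N, a (k n) * lam n * Real.log (lam n) := by
      apply Finset.sum_le_sum
      intro i hi
      exact key3 i (Finset.mem_Icc.mp hi).1
    have hgL : ∑ n ∈ Finset.Icc 1 N,
        (Real.log 2 * (1 / (n : ℝ)) - 4 / (n : ℝ) ^ ((3 : ℝ) / 2)) ≤
        ∑ n ∈ Finset.Icc 1 N, g n := by
      apply Finset.sum_le_sum
      intro i hi
      exact hglb i (Finset.mem_Icc.mp hi).1
    have hLs : ∑ n ∈ Finset.Icc 1 N, 4 / (n : ℝ) ^ ((3 : ℝ) / 2) ≤ L :=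
      Summable.sum_le_tsum (Finset.Icc 1 N) (fun i _ => by positivity) hsummable
    have := Finset.sum_sub_distrib (s := Finset.Icc 1 N)
      (f := fun n => Real.log 2 * (1 / (n : ℝ)))
      (g := fun n => 4 / (n : ℝ) ^ ((3 : ℝ) / 2))
    rw [this, ← Finset.mul_sum] at hgL
    linarith
  refine tendsto_atTop_mono hbound ?_
  have hh := harmonic_Icc_tendsto
  have h2 : Tendsto (fun N : ℕ => Real.log 2 * (∑ n ∈ Finset.Icc 1 N, (1 : ℝ) / n))
      atTop atTop :=
    (tendsto_const_mul_atTop_of_pos (Real.log_pos (by norm_num))).mpr hh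
  exact (tendsto_atTop_add_const_right _ (-L) h2).congr (fun N => by ring)
end
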